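/- For a black edge ℓ = n e₁ − n e₂ with n > 1 and 2n ≤ 2q, the polynomial ℓ(ξ) = (1/(q+1))(n ∂A_{q+1}/∂ξ₁ − n ∂A_{q+1}/∂ξ₂) contains the monomial ξ₂^{n−1} ξ₃^{q+1−n} with nonzero coefficient n · (q!/((n−1)!(q+1−n)!)) · ((q+1)!/((n−1)!(q+1−n)!)) · (1 − 1/n); in particular ℓ(ξ) has a monomial divisible by neither ξ₁^n nor ξ₂^n. -/

import Mathlib

open Finset MvPolynomial

/-- `A_r(ξ) = Σ_{β ∈ ℕ^m, |β|₁ = r} multinomial(r,β)² ξ^β` over `ℚ`. -/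
noncomputable def Apoly (m r : ℕ) : MvPolynomial (Fin m) ℚ :=
  ∑ β ∈ (Fintype.piFinset fun _ : Fin m => Finset.range (r + 1)).filter
      (fun β => ∑ i, β i = r),
    MvPolynomial.C ((Nat.multinomial Finset.univ β : ℚ) ^ 2) *
      ∏ i, MvPolynomial.X i ^ β i

/-! The coefficient of `ξ^d` in `∂ᵢ A_r` is `(dᵢ + 1) · multinomial(d + eᵢ)²`. For
`d = (0, n-1, q+1-n, 0, …)` this is `((q+1) · C(q, n-1))²` for `i = 1` and `n · C(q+1, n)²`
for `i = 2`; Pascal's rule `n · C(q+1, n) = (q+1) · C(q, n-1)` turns the coefficient of `ξ^d`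
in `ℓ` into `(n-1)(q+1) · C(q, n-1)²`, which is nonzero as `n > 1`. -/

section Multinomial

variable {σ : Type*} [Fintype σ] [DecidableEq σ]

theorem Nat.multinomial_univ_single_add_single {j₁ j₂ : σ} (h : j₁ ≠ j₂) (a b : ℕ) :
    Nat.multinomial univ ⇑(Finsupp.single j₁ a + Finsupp.single j₂ b) = (a + b).choose a := by
  rw [← Finsupp.multinomial_eq_of_support_subset (subset_univ _),
    Finsupp.multinomial_eq_of_support_subset (s := {j₁, j₂}), Nat.binomial_eq_choose h]
  · simp [h, h.symm]
  · refine Finsupp.support_add.trans (union_subset ?_ ?_) <;>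
      refine Finsupp.support_single_subset.trans ?_ <;> simp

theorem Nat.multinomial_univ_single_add_single_add_single_one {j₀ j₁ j₂ : σ}
    (h₀₁ : j₀ ≠ j₁) (h₀₂ : j₀ ≠ j₂) (h₁₂ : j₁ ≠ j₂) (a b : ℕ) :
    Nat.multinomial univ
        ⇑(Finsupp.single j₁ a + Finsupp.single j₂ b + Finsupp.single j₀ 1 : σ →₀ ℕ) =
      (a + b + 1) * (a + b).choose a := by
  rw [← Finsupp.multinomial_eq_of_support_subset (subset_univ _),
    Finsupp.multinomial_eq_of_support_subset (s := insert j₀ {j₁, j₂}),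
    Nat.multinomial_insert_one (by simp [h₀₁, h₀₂]) (by simp [h₀₁.symm, h₀₂.symm]),
    sum_pair h₁₂, Nat.binomial_eq_choose h₁₂]
  · simp [h₀₁, h₀₂, h₁₂, h₁₂.symm]
  · refine Finsupp.support_add.trans (union_subset (Finsupp.support_add.trans
      (union_subset ?_ ?_)) ?_) <;> refine Finsupp.support_single_subset.trans ?_ <;> simp

end Multinomial

theorem MvPolynomial.C_mul_prod_X_pow_eq_monomial {σ R : Type*} [Fintype σ] [CommSemiring R]
    (c : R) (β : σ → ℕ) :
    C c * ∏ i, X i ^ β i = monomial (Finsupp.equivFunOnFinite.symm β) c := by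
  rw [monomial_eq, Finsupp.prod_fintype _ _ (by simp)]
  rfl

theorem coeff_Apoly {m r : ℕ} (d : Fin m →₀ ℕ) (hd : d.degree = r) :
    coeff d (Apoly m r) = (Nat.multinomial univ ⇑d : ℚ) ^ 2 := by
  rw [Finsupp.degree_eq_sum] at hd
  rw [Apoly, coeff_sum, sum_eq_single_of_mem ⇑d]
  · rw [C_mul_prod_X_pow_eq_monomial, coeff_monomial,
      if_pos (Finsupp.equivFunOnFinite_symm_coe d)]
  · simp only [mem_filter, Fintype.mem_piFinset, mem_range, hd, and_true]
    intro i
    exact Nat.lt_succ_of_le (hd ▸ single_le_sum (fun j _ => Nat.zero_le (d j)) (mem_univ i))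
  · intro β _ hβ
    rw [C_mul_prod_X_pow_eq_monomial, coeff_monomial, if_neg]
    rintro rfl
    exact hβ rfl

theorem coeff_pderiv_Apoly_of_ne {m r a b : ℕ} {j₀ j₁ j₂ : Fin m}
    (h₀₁ : j₀ ≠ j₁) (h₀₂ : j₀ ≠ j₂) (h₁₂ : j₁ ≠ j₂) (hr : a + b + 1 = r) :
    coeff (Finsupp.single j₁ a + Finsupp.single j₂ b) (pderiv j₀ (Apoly m r)) =
      ((r * (a + b).choose a : ℕ) : ℚ) ^ 2 := by
  rw [coeff_pderiv, coeff_Apoly _ (by simp only [map_add, Finsupp.degree_single]; omega),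
    Nat.multinomial_univ_single_add_single_add_single_one h₀₁ h₀₂ h₁₂, hr]
  simp [h₀₁, h₀₂]

theorem coeff_pderiv_Apoly_self {m r a b : ℕ} {j₁ j₂ : Fin m} (h₁₂ : j₁ ≠ j₂)
    (hr : a + b + 1 = r) :
    coeff (Finsupp.single j₁ a + Finsupp.single j₂ b) (pderiv j₁ (Apoly m r)) =
      (r.choose (a + 1) : ℚ) ^ 2 * ((a + 1 : ℕ) : ℚ) := by
  rw [coeff_pderiv, add_right_comm, ← Finsupp.single_add,
    coeff_Apoly _ (by simp only [map_add, Finsupp.degree_single]; omega),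
    Nat.multinomial_univ_single_add_single h₁₂, show a + 1 + b = r by omega]
  simp [h₁₂.symm]

theorem factorial_quotient_product_eq_choose_sq {q n : ℕ} (hn : 1 ≤ n) (hnq : n ≤ q + 1) :
    (n : ℚ) * ((q.factorial : ℚ) / ((n - 1).factorial * (q + 1 - n).factorial)) *
        (((q + 1).factorial : ℚ) / ((n - 1).factorial * (q + 1 - n).factorial)) *
        (1 - 1 / (n : ℚ)) =
      (n - 1) * (q + 1) * (q.choose (n - 1) : ℚ) ^ 2 := by
  have hchoose : (q.factorial : ℚ) / ((n - 1).factorial * (q + 1 - n).factorial) =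
      q.choose (n - 1) := by
    rw [show q + 1 - n = q - (n - 1) by omega, Nat.cast_choose ℚ (by omega)]
  rw [Nat.factorial_succ, Nat.cast_mul, mul_div_assoc, hchoose]
  have : (n : ℚ) ≠ 0 := by positivity
  field_simp
  push_cast
  ring

/-- for the black edge ℓ = n e₁ − n e₂ with 1 < n ≤ q (so
2n ≤ 2q) and m ≥ 3, the polynomial ℓ(ξ) = (1/(q+1))(n ∂A_{q+1}/∂ξ₁ −
n ∂A_{q+1}/∂ξ₂) contains the monomial ξ₂^{n−1} ξ₃^{q+1−n} with the nonzero
coefficient n · (q!/((n−1)!(q+1−n)!)) · ((q+1)!/((n−1)!(q+1−n)!)) · (1 − 1/n);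
in particular ℓ(ξ) has a monomial divisible by neither ξ₁ⁿ nor ξ₂ⁿ. -/
theorem black_edge_monomial (q m n : ℕ) (hm : 3 ≤ m) (hn : 1 < n)
    (hnq : n ≤ q) :
    let i0 : Fin m := ⟨0, by omega⟩
    let i1 : Fin m := ⟨1, by omega⟩
    let i2 : Fin m := ⟨2, by omega⟩
    let lpoly : MvPolynomial (Fin m) ℚ :=
      ((q : ℚ) + 1)⁻¹ •
        ((n : ℤ) • MvPolynomial.pderiv i0 (Apoly m (q + 1)) -
          (n : ℤ) • MvPolynomial.pderiv i1 (Apoly m (q + 1)))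
    MvPolynomial.coeff
        (Finsupp.single i1 (n - 1) + Finsupp.single i2 (q + 1 - n)) lpoly =
      (n : ℚ) * ((q.factorial : ℚ) / ((n - 1).factorial * (q + 1 - n).factorial)) *
        (((q + 1).factorial : ℚ) / ((n - 1).factorial * (q + 1 - n).factorial)) *
        (1 - 1 / (n : ℚ)) ∧
    (n : ℚ) * ((q.factorial : ℚ) / ((n - 1).factorial * (q + 1 - n).factorial)) *
        (((q + 1).factorial : ℚ) / ((n - 1).factorial * (q + 1 - n).factorial)) *
        (1 - 1 / (n : ℚ)) ≠ 0 := by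
  intro i0 i1 i2 lpoly
  have h01 : i0 ≠ i1 := by simp [i0, i1, Fin.ext_iff]
  have h02 : i0 ≠ i2 := by simp [i0, i2, Fin.ext_iff]
  have h12 : i1 ≠ i2 := by simp [i1, i2, Fin.ext_iff]
  have hr : n - 1 + (q + 1 - n) + 1 = q + 1 := by omega
  have hc0 := coeff_pderiv_Apoly_of_ne (m := m) h01 h02 h12 hr
  have hc1 := coeff_pderiv_Apoly_self (m := m) h12 hr
  rw [show n - 1 + (q + 1 - n) = q by omega] at hc0
  rw [Nat.sub_add_cancel hn.le] at hc1
  set c := q.choose (n - 1)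
  have hpascal : ((q + 1).choose n : ℚ) * n = (q + 1) * c := by
    obtain ⟨k, rfl⟩ : ∃ k, n = k + 1 := ⟨n - 1, by omega⟩
    exact_mod_cast (Nat.add_one_mul_choose_eq q k).symm
  have hc : (0 : ℚ) < c := by exact_mod_cast Nat.choose_pos (by omega)
  have hn' : (0 : ℚ) < n - 1 := by rw [sub_pos]; exact_mod_cast hn
  rw [factorial_quotient_product_eq_choose_sq hn.le (by omega)]
  refine ⟨?_, by positivity⟩
  rw [coeff_smul, coeff_sub, coeff_smul, coeff_smul, hc0, hc1, smul_eq_mul, zsmul_eq_mul,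
    zsmul_eq_mul]
  push_cast
  field_simp
  linear_combination (-((q + 1).choose n * n + (q + 1) * c : ℚ)) * hpascal
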